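/- arXiv:2012.03250 — 11 statements merged into one kernel-verified Lean document; each statement's English description precedes it below -/
import Mathlib

section
/- Let F be a Pythagorean field of characteristic 0 and let A, B, C ∈ F² be non-collinear points (i.e., (B₁−A₁)(C₂−A₂) ≠ (B₂−A₂)(C₁−A₁)). Then the three heights of the triangle ABC intersect in one point: there exists H ∈ F² with (H−A)⬝(B−C) = 0, (H−B)⬝(C−A) = 0, and (H−C)⬝(A−B) = 0. -/
/-- In the Cartesian plane over a Pythagorean field of characteristic 0,
the three heights of a triangle (with non-collinear vertices) intersect in one point
(Wu's axiom (O-5)). -/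
theorem stmt_6 {F : Type*} [Field F] [CharZero F]
    (hPy : ∀ x y : F, ∃ z : F, x ^ 2 + y ^ 2 = z ^ 2)
    (A B C : F × F)
    (hncol : (B.1 - A.1) * (C.2 - A.2) ≠ (B.2 - A.2) * (C.1 - A.1)) :
    ∃ H : F × F,
      (H.1 - A.1) * (B.1 - C.1) + (H.2 - A.2) * (B.2 - C.2) = 0 ∧
      (H.1 - B.1) * (C.1 - A.1) + (H.2 - B.2) * (C.2 - A.2) = 0 ∧
      (H.1 - C.1) * (A.1 - B.1) + (H.2 - C.2) * (A.2 - B.2) = 0 := by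
  set d : F := (B.1 - A.1) * (C.2 - A.2) - (B.2 - A.2) * (C.1 - A.1) with hd
  have hd0 : d ≠ 0 := sub_ne_zero.mpr hncol
  set e1 : F := A.1 * (B.1 - C.1) + A.2 * (B.2 - C.2) with he1
  set e2 : F := B.1 * (C.1 - A.1) + B.2 * (C.2 - A.2) with he2
  refine ⟨((e1 * (C.2 - A.2) - e2 * (B.2 - C.2)) / d,
           ((B.1 - C.1) * e2 - (C.1 - A.1) * e1) / d), ?_, ?_, ?_⟩ <;>
    · simp only []
      field_simp
      ring
end

section
/- Let F be a Pythagorean field of characteristic 0 and let ℓ₁ = (a₁, b₁, c₁) and ℓ₂ = (a₂, b₂, c₂) be two non-isotropic lines in the Cartesian plane over F (so a_i² + b_i² ≠ 0 for i = 1, 2). Then there exists a non-isotropic line k = (a, b, c) with a² + b² ≠ 0 such that for every point P with a₁P₁ + b₁P₂ + c₁ = 0, the reflection of P across k lies on ℓ₂, i.e., a₂·(refl_k P)₁ + b₂·(refl_k P)₂ + c₂ = 0. (Every pair of non-isotropic lines has a symmetric axis; this is axiom (H*3), and for intersecting lines it is Wu's axiom of symmetric axis.) -/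
/-- The reflection of a point `P` across the line `a·x + b·y + c = 0`
(meaningful when the line is non-isotropic, i.e. `a² + b² ≠ 0`):
`refl P = P − (2(a·P₁ + b·P₂ + c)/(a² + b²))·(a, b)`. -/
def reflLine {F : Type*} [Field F] (a b c : F) (P : F × F) : F × F :=
  (P.1 - 2 * (a * P.1 + b * P.2 + c) / (a ^ 2 + b ^ 2) * a,
   P.2 - 2 * (a * P.1 + b * P.2 + c) / (a ^ 2 + b ^ 2) * b)

/-!
If `z₁² = a₁² + b₁²` and `z₂² = a₂² + b₂²`, the line `z₂·ℓ₁ + z₁·ℓ₂` is an angle bisector of `ℓ₁`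
and `ℓ₂`, and reflecting across it carries `ℓ₁` onto `ℓ₂` as soon as it is non-isotropic. Of the two
bisectors, obtained from the roots `±z₂`, at least one is non-isotropic: their squared normals add up to
`4 z₁² z₂²`, which is nonzero outside characteristic 2.
-/

theorem eval_reflLine {F : Type*} [Field F] (a b c a' b' c' : F) (P : F × F) :
    a' * (reflLine a b c P).1 + b' * (reflLine a b c P).2 + c' =
      a' * P.1 + b' * P.2 + c' -
        2 * (a * P.1 + b * P.2 + c) / (a ^ 2 + b ^ 2) * (a' * a + b' * b) := by
  simp only [reflLine]
  ring

theorem reflLine_bisector_mem {F : Type*} [Field F] {a₁ b₁ c₁ a₂ b₂ c₂ z₁ z₂ : F}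
    (hz₁ : a₁ ^ 2 + b₁ ^ 2 = z₁ ^ 2) (hz₂ : a₂ ^ 2 + b₂ ^ 2 = z₂ ^ 2)
    (hk : (z₂ * a₁ + z₁ * a₂) ^ 2 + (z₂ * b₁ + z₁ * b₂) ^ 2 ≠ 0)
    {P : F × F} (hP : a₁ * P.1 + b₁ * P.2 + c₁ = 0) :
    a₂ * (reflLine (z₂ * a₁ + z₁ * a₂) (z₂ * b₁ + z₁ * b₂) (z₂ * c₁ + z₁ * c₂) P).1 +
      b₂ * (reflLine (z₂ * a₁ + z₁ * a₂) (z₂ * b₁ + z₁ * b₂) (z₂ * c₁ + z₁ * c₂) P).2 + c₂ = 0 := by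
  set d := a₁ * a₂ + b₁ * b₂ + z₁ * z₂
  have hnorm : (z₂ * a₁ + z₁ * a₂) ^ 2 + (z₂ * b₁ + z₁ * b₂) ^ 2 = 2 * z₁ * z₂ * d := by
    linear_combination z₂ ^ 2 * hz₁ + z₁ ^ 2 * hz₂
  have hdot : a₂ * (z₂ * a₁ + z₁ * a₂) + b₂ * (z₂ * b₁ + z₁ * b₂) = z₂ * d := by
    linear_combination z₁ * hz₂
  have hval : (z₂ * a₁ + z₁ * a₂) * P.1 + (z₂ * b₁ + z₁ * b₂) * P.2 + (z₂ * c₁ + z₁ * c₂) =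
      z₁ * (a₂ * P.1 + b₂ * P.2 + c₂) := by
    linear_combination z₂ * hP
  rw [hnorm] at hk
  rw [eval_reflLine, hdot, hval, hnorm, sub_eq_zero, div_mul_eq_mul_div, eq_div_iff hk]
  ring

theorem exists_sq_eq_bisector_ne_zero {F : Type*} [Field F] [NeZero (2 : F)]
    {a₁ b₁ a₂ b₂ z₁ z₂ : F} (h₁ : a₁ ^ 2 + b₁ ^ 2 ≠ 0) (h₂ : a₂ ^ 2 + b₂ ^ 2 ≠ 0)
    (hz₁ : a₁ ^ 2 + b₁ ^ 2 = z₁ ^ 2) (hz₂ : a₂ ^ 2 + b₂ ^ 2 = z₂ ^ 2) :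
    ∃ w, a₂ ^ 2 + b₂ ^ 2 = w ^ 2 ∧ (w * a₁ + z₁ * a₂) ^ 2 + (w * b₁ + z₁ * b₂) ^ 2 ≠ 0 := by
  by_contra! h
  have hplus := h z₂ hz₂
  have hminus := h (-z₂) (by rw [hz₂, neg_sq])
  have hsum : 2 * (2 * ((a₁ ^ 2 + b₁ ^ 2) * (a₂ ^ 2 + b₂ ^ 2))) = 0 := by
    linear_combination hplus + hminus + 2 * (a₂ ^ 2 + b₂ ^ 2) * hz₁ + 2 * (a₁ ^ 2 + b₁ ^ 2) * hz₂
  simp only [mul_eq_zero, two_ne_zero, h₁, h₂, or_self] at hsum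

/-- In the Cartesian plane over a Pythagorean field of characteristic 0,
any two non-isotropic lines have a symmetric axis: a non-isotropic fold placing
the first line onto the second (axiom (H*3)). -/
theorem stmt_7 {F : Type*} [Field F] [CharZero F]
    (hPy : ∀ x y : F, ∃ z : F, x ^ 2 + y ^ 2 = z ^ 2)
    (a₁ b₁ c₁ a₂ b₂ c₂ : F)
    (h₁ : a₁ ^ 2 + b₁ ^ 2 ≠ 0) (h₂ : a₂ ^ 2 + b₂ ^ 2 ≠ 0) :
    ∃ a b c : F, a ^ 2 + b ^ 2 ≠ 0 ∧
      ∀ P : F × F, a₁ * P.1 + b₁ * P.2 + c₁ = 0 →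
        a₂ * (reflLine a b c P).1 + b₂ * (reflLine a b c P).2 + c₂ = 0 := by
  obtain ⟨z₁, hz₁⟩ := hPy a₁ b₁
  obtain ⟨z₂, hz₂⟩ := hPy a₂ b₂
  obtain ⟨w, hw, hk⟩ := exists_sq_eq_bisector_ne_zero h₁ h₂ hz₁ hz₂
  exact ⟨_, _, w * c₁ + z₁ * c₂, hk, fun P hP => reflLine_bisector_mem hz₁ hw hk hP⟩
end

section
/- Let F be a field of characteristic ≠ 2 in which −1 is not a square. Then for any two distinct points P₁, P₂ ∈ F² there exists a non-isotropic line (a, b, c) (with a² + b² ≠ 0) such that the reflection of P₁ across (a, b, c) equals P₂. (Axiom (H-2): given two points, one can make a fold that places the first onto the second.) -/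
theorem sq_add_sq_ne_zero_of_not_exists_sq_eq_neg_one {F : Type*} [Field F]
    (hns : ¬ ∃ i : F, i ^ 2 = -1) {a b : F} (hab : (a, b) ≠ 0) : a ^ 2 + b ^ 2 ≠ 0 := by
  intro h
  rcases eq_or_ne b 0 with rfl | hb
  · exact hab (by simpa using h)
  · exact hns ⟨a / b, by field_simp; linear_combination h⟩

theorem reflLine_perpBisector {F : Type*} [Field F] (h2 : (2 : F) ≠ 0) (P₁ P₂ : F × F)
    (hiso : (P₁.1 - P₂.1) ^ 2 + (P₁.2 - P₂.2) ^ 2 ≠ 0) :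
    reflLine (P₁.1 - P₂.1) (P₁.2 - P₂.2)
      (-((P₁.1 - P₂.1) * (P₁.1 + P₂.1) + (P₁.2 - P₂.2) * (P₁.2 + P₂.2)) / 2) P₁ = P₂ := by
  ext <;> simp only [reflLine] <;> field_simp <;> ring

/-- Over a field of characteristic ≠ 2 in which `-1` is not a square,
for any two distinct points there is a non-isotropic line reflecting the first
onto the second (axiom (H-2)). -/
theorem stmt_8 {F : Type*} [Field F] (hchar : (2 : F) ≠ 0)
    (hns : ¬ ∃ i : F, i ^ 2 = -1) :
    ∀ P₁ P₂ : F × F, P₁ ≠ P₂ →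
      ∃ a b c : F, a ^ 2 + b ^ 2 ≠ 0 ∧ reflLine a b c P₁ = P₂ := by
  intro P₁ P₂ hne
  have hiso : (P₁.1 - P₂.1) ^ 2 + (P₁.2 - P₂.2) ^ 2 ≠ 0 :=
    sq_add_sq_ne_zero_of_not_exists_sq_eq_neg_one hns (sub_ne_zero.mpr hne)
  exact ⟨_, _, _, hiso, reflLine_perpBisector hchar P₁ P₂ hiso⟩
end

section
/- Let F be a linearly ordered field and consider the Cartesian plane F². Let A, B, C ∈ F² be non-collinear, let ℓ = (a, b, c) be a line with (a, b) ≠ (0, 0) such that none of A, B, C lies on ℓ, and suppose there is a point D on ℓ strictly between A and B. Then there exists a point D' on ℓ which is strictly between A and C or strictly between B and C. (Pasch's axiom (B-4) holds in the plane over any ordered field.) -/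
/-!
A point lies on one side or the other of the line `ax + by + c = 0` according to the sign of
`f(P) = a P.1 + b P.2 + c`, and `f` is affine along segments. So `D` strictly between `A` and `B`
with `f D = 0` forces `f A` and `f B` to have opposite signs; as `f C ≠ 0`, `f C` has the sign
opposite to one of them, and the zero of `f` on that segment is the required point `D'`.
-/

/-- `Q` lies strictly between `P` and `R` in the plane over a linearly ordered
field: `Q = P + t·(R − P)` for some `0 < t < 1`, and `P ≠ R`. -/
def StrictBtw {F : Type*} [Field F] [LinearOrder F] [IsStrictOrderedRing F] (P Q R : F × F) : Prop :=
  P ≠ R ∧ ∃ t : F, 0 < t ∧ t < 1 ∧ Q = P + t • (R - P)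

section Sign

variable {R : Type*} [CommRing R] [LinearOrder R] [IsStrictOrderedRing R]

theorem mul_neg_of_sub_mul_add_mul_eq_zero {t p r : R} (ht0 : 0 < t) (ht1 : t < 1) (hp : p ≠ 0)
    (h : (1 - t) * p + t * r = 0) : p * r < 0 := by
  have hprod : t * (p * r) = -((1 - t) * (p * p)) := by linear_combination p * h
  have hpos : 0 < (1 - t) * (p * p) := mul_pos (sub_pos.2 ht1) (mul_self_pos.2 hp)
  exact neg_of_mul_neg_right (hprod ▸ neg_neg_of_pos hpos) ht0.le

theorem mul_neg_or_mul_neg_of_mul_neg {x y z : R} (hxy : x * y < 0) (hz : z ≠ 0) :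
    x * z < 0 ∨ y * z < 0 := by
  by_contra! h
  have : 0 ≤ (x * y) * (z * z) := by linear_combination mul_nonneg h.1 h.2
  exact (mul_neg_of_neg_of_pos hxy (mul_self_pos.2 hz)).not_ge this

end Sign

theorem exists_sub_mul_add_mul_eq_zero_of_mul_neg {F : Type*} [Field F] [LinearOrder F]
    [IsStrictOrderedRing F] {p r : F} (h : p * r < 0) :
    ∃ t : F, 0 < t ∧ t < 1 ∧ (1 - t) * p + t * r = 0 := by
  have hsq : 0 < (p - r) * (p - r) := by nlinarith [mul_self_nonneg p, mul_self_nonneg r]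
  have hpr : p - r ≠ 0 := fun h0 => by simp [h0] at hsq
  refine ⟨p / (p - r), ?_, ?_, by field_simp; ring⟩
  -- the signs of `t` and `1 - t` are read off after multiplying by `(p - r)² > 0`
  · have : p / (p - r) * ((p - r) * (p - r)) = p * p - p * r := by field_simp
    exact pos_of_mul_pos_left (by nlinarith) hsq.le
  · have : (1 - p / (p - r)) * ((p - r) * (p - r)) = r * r - p * r := by field_simp; ring
    exact sub_pos.1 (pos_of_mul_pos_left (by nlinarith) hsq.le)

def lineEval {R : Type*} [CommRing R] (a b c : R) (P : R × R) : R := a * P.1 + b * P.2 + c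

theorem lineEval_add_smul_sub {R : Type*} [CommRing R] (a b c t : R) (P Q : R × R) :
    lineEval a b c (P + t • (Q - P)) = (1 - t) * lineEval a b c P + t * lineEval a b c Q := by
  simp only [lineEval, Prod.fst_add, Prod.snd_add, Prod.smul_fst, Prod.smul_snd, Prod.fst_sub,
    Prod.snd_sub, smul_eq_mul]
  ring

section Line

variable {F : Type*} [Field F] [LinearOrder F] [IsStrictOrderedRing F]

theorem lineEval_mul_neg_of_strictBtw {a b c : F} {P D R : F × F} (hP : lineEval a b c P ≠ 0)
    (hD : lineEval a b c D = 0) (hbtw : StrictBtw P D R) :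
    lineEval a b c P * lineEval a b c R < 0 := by
  obtain ⟨-, t, ht0, ht1, rfl⟩ := hbtw
  exact mul_neg_of_sub_mul_add_mul_eq_zero ht0 ht1 hP (lineEval_add_smul_sub a b c t P R ▸ hD)

theorem exists_strictBtw_lineEval_eq_zero {a b c : F} {P R : F × F}
    (h : lineEval a b c P * lineEval a b c R < 0) :
    ∃ D : F × F, lineEval a b c D = 0 ∧ StrictBtw P D R := by
  obtain ⟨t, ht0, ht1, ht⟩ := exists_sub_mul_add_mul_eq_zero_of_mul_neg h
  refine ⟨P + t • (R - P), by rwa [lineEval_add_smul_sub], ?_, t, ht0, ht1, rfl⟩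
  rintro rfl
  exact (mul_self_nonneg _).not_gt h

end Line

theorem stmt_10_general {F : Type*} [Field F] [LinearOrder F] [IsStrictOrderedRing F]
    (A B C : F × F)
    (a b c : F)
    (hA : a * A.1 + b * A.2 + c ≠ 0)
    (hC : a * C.1 + b * C.2 + c ≠ 0)
    (D : F × F) (hD : a * D.1 + b * D.2 + c = 0) (hDbtw : StrictBtw A D B) :
    ∃ D' : F × F, a * D'.1 + b * D'.2 + c = 0 ∧
      (StrictBtw A D' C ∨ StrictBtw B D' C) := by
  have hAB : lineEval a b c A * lineEval a b c B < 0 :=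
    lineEval_mul_neg_of_strictBtw hA hD hDbtw
  rcases mul_neg_or_mul_neg_of_mul_neg hAB hC with hAC | hBC
  · obtain ⟨D', hD', hbtw⟩ := exists_strictBtw_lineEval_eq_zero hAC
    exact ⟨D', hD', Or.inl hbtw⟩
  · obtain ⟨D', hD', hbtw⟩ := exists_strictBtw_lineEval_eq_zero hBC
    exact ⟨D', hD', Or.inr hbtw⟩

/-- Pasch's axiom (B-4) holds in the Cartesian plane over any
linearly ordered field. -/
theorem stmt_10 {F : Type*} [Field F] [LinearOrder F] [IsStrictOrderedRing F]
    (A B C : F × F) (hncol : ¬ Collinear F ({A, B, C} : Set (F × F)))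
    (a b c : F) (hl : (a, b) ≠ ((0 : F), (0 : F)))
    (hA : a * A.1 + b * A.2 + c ≠ 0)
    (hB : a * B.1 + b * B.2 + c ≠ 0)
    (hC : a * C.1 + b * C.2 + c ≠ 0)
    (D : F × F) (hD : a * D.1 + b * D.2 + c = 0) (hDbtw : StrictBtw A D B) :
    ∃ D' : F × F, a * D'.1 + b * D'.2 + c = 0 ∧
      (StrictBtw A D' C ∨ StrictBtw B D' C) :=
  stmt_10_general A B C a b c hA hC D hD hDbtw
end

section
/- Let F be a linearly ordered field in which every nonnegative element is a square. Let (a, b, c) be a line with (a, b) ≠ (0, 0), let (x₀, y₀) ∈ F², and let s ∈ F satisfy (a·x₀ + b·y₀ + c)² ≤ s·(a² + b²). Then there exists (x, y) ∈ F² with a·x + b·y + c = 0 and (x − x₀)² + (y − y₀)² = s. (A circle intersects a line whenever the distance from the center to the line does not exceed the radius.) -/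
/-!
Let `d = a x₀ + b y₀ + c` and `n = a² + b² > 0`. The hypothesis makes `s n - d²` a square `u²`,
and the point `(x₀, y₀) - ((a d + b u) / n, (b d - a u) / n)`, obtained from the foot of the
perpendicular by moving along the line's direction `(-b, a)`, works: it satisfies the line
equation, and by the two-square identity `(a d + b u)² + (a u - b d)² = n (d² + u²)` its squared
distance from the centre is `(d² + u²) / n = s`.
-/

theorem sq_add_sq_pos_of_ne_zero {R : Type*} [CommRing R] [LinearOrder R] [IsStrictOrderedRing R]
    {a b : R} (h : (a, b) ≠ 0) : 0 < a ^ 2 + b ^ 2 := by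
  refine (add_nonneg (sq_nonneg a) (sq_nonneg b)).lt_of_ne fun h0 => h ?_
  obtain ⟨ha, hb⟩ := (add_eq_zero_iff_of_nonneg (sq_nonneg a) (sq_nonneg b)).mp h0.symm
  exact Prod.ext (pow_eq_zero_iff two_ne_zero |>.mp ha) (pow_eq_zero_iff two_ne_zero |>.mp hb)

theorem exists_mem_line_dist_sq_eq {F : Type*} [Field F] {a b c x₀ y₀ s u : F}
    (hn : a ^ 2 + b ^ 2 ≠ 0) (hu : (a * x₀ + b * y₀ + c) ^ 2 + u ^ 2 = s * (a ^ 2 + b ^ 2)) :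
    ∃ x y : F, a * x + b * y + c = 0 ∧ (x - x₀) ^ 2 + (y - y₀) ^ 2 = s := by
  set d := a * x₀ + b * y₀ + c
  refine ⟨x₀ - (a * d + b * u) / (a ^ 2 + b ^ 2), y₀ - (b * d - a * u) / (a ^ 2 + b ^ 2), ?_, ?_⟩
  · field_simp
    ring
  · rw [(eq_div_iff hn).mpr hu.symm]
    field_simp
    ring

/-- In the plane over a linearly ordered field in which every
nonnegative element is a square, a circle intersects a line whenever the
distance from the center to the line does not exceed the radius. -/
theorem stmt_11 {F : Type*} [Field F] [LinearOrder F] [IsStrictOrderedRing F]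
    (hsq : ∀ x : F, 0 ≤ x → ∃ y : F, x = y ^ 2)
    (a b c : F) (hl : (a, b) ≠ ((0 : F), (0 : F)))
    (x₀ y₀ s : F) (hs : (a * x₀ + b * y₀ + c) ^ 2 ≤ s * (a ^ 2 + b ^ 2)) :
    ∃ x y : F, a * x + b * y + c = 0 ∧ (x - x₀) ^ 2 + (y - y₀) ^ 2 = s := by
  obtain ⟨u, hu⟩ := hsq _ (sub_nonneg.mpr hs)
  exact exists_mem_line_dist_sq_eq (sq_add_sq_pos_of_ne_zero hl).ne'
    (by rw [← hu]; ring)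
end

section
/- Let F be a linearly ordered field in which every nonnegative element is a square. Let P₁, P₂ ∈ F² and let ℓ = (a, b, c) be a line with (a, b) ≠ (0, 0), and suppose P₂ is closer to ℓ than to P₁, i.e., (a·(P₂)₁ + b·(P₂)₂ + c)² ≤ ((P₁ − P₂) ⬝ (P₁ − P₂))·(a² + b²). Then there exists a line m = (a', b', c') with a'² + b'² ≠ 0 such that P₂ lies on m and the reflection of P₁ across m lies on ℓ. (Axiom (H*5): the fold placing P₁ onto ℓ and passing through P₂ exists.) -/
/-!
Let `s = a² + b²` and `r² = |P₁ - P₂|²`. The hypothesis says `r² s - e² ≥ 0`, where `e` is the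
value of the equation of `ℓ` at `P₂`, so it has a square root `y`, and moving from the foot of the
perpendicular from `P₂` by `y / s` along `ℓ` gives a point `Q ∈ ℓ` with `|Q - P₂| = |P₁ - P₂|`.
The fold is the perpendicular bisector of `P₁Q`, which passes through `P₂`; when `Q = P₁` any
line through `P₁` and `P₂` does.
-/

namespace Fold

variable {F : Type*}

def sqDist [Ring F] (P Q : F × F) : F := (P.1 - Q.1) ^ 2 + (P.2 - Q.2) ^ 2

section Field

variable [Field F]

theorem reflLine_eq_self {a b c : F} {P : F × F} (h : a * P.1 + b * P.2 + c = 0) :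
    reflLine a b c P = P := by
  simp [reflLine, h]

theorem reflLine_perpBisector [NeZero (2 : F)] {P Q : F × F} (h : sqDist P Q ≠ 0) :
    reflLine (P.1 - Q.1) (P.2 - Q.2) ((Q.1 ^ 2 + Q.2 ^ 2 - P.1 ^ 2 - P.2 ^ 2) / 2) P = Q := by
  unfold sqDist at h
  have hnum : (P.1 - Q.1) * P.1 + (P.2 - Q.2) * P.2 + (Q.1 ^ 2 + Q.2 ^ 2 - P.1 ^ 2 - P.2 ^ 2) / 2
      = ((P.1 - Q.1) ^ 2 + (P.2 - Q.2) ^ 2) / 2 := by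
    field_simp
    ring
  ext <;> simp only [reflLine, hnum] <;> field_simp <;> ring

theorem perpBisector_of_sqDist_eq [NeZero (2 : F)] {P Q R : F × F} (h : sqDist P R = sqDist Q R) :
    (P.1 - Q.1) * R.1 + (P.2 - Q.2) * R.2 + (Q.1 ^ 2 + Q.2 ^ 2 - P.1 ^ 2 - P.2 ^ 2) / 2 = 0 := by
  unfold sqDist at h
  field_simp
  linear_combination -h

end Field

section OrderedField

variable [Field F] [LinearOrder F] [IsStrictOrderedRing F]

theorem sq_add_sq_ne_zero_of_ne {x y : F} (h : (x, y) ≠ (0, 0)) : x ^ 2 + y ^ 2 ≠ 0 := by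
  rw [sq, sq, Ne, mul_self_add_mul_self_eq_zero]
  exact fun ⟨hx, hy⟩ => h (by rw [hx, hy])

theorem sqDist_ne_zero {P Q : F × F} (h : P ≠ Q) : sqDist P Q ≠ 0 :=
  sq_add_sq_ne_zero_of_ne fun hPQ => h <|
    Prod.ext (sub_eq_zero.mp (congrArg Prod.fst hPQ)) (sub_eq_zero.mp (congrArg Prod.snd hPQ))

theorem exists_line_through (P R : F × F) :
    ∃ a b c : F, a ^ 2 + b ^ 2 ≠ 0 ∧ a * P.1 + b * P.2 + c = 0 ∧ a * R.1 + b * R.2 + c = 0 := by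
  by_cases hPR : P = R
  · exact ⟨1, 0, -P.1, by norm_num, by ring, by rw [← hPR]; ring⟩
  · refine ⟨P.2 - R.2, R.1 - P.1, P.1 * R.2 - R.1 * P.2, ?_, by ring, by ring⟩
    intro h
    exact sqDist_ne_zero hPR (by unfold sqDist; linear_combination h)

theorem exists_mem_line_sqDist_eq (hsq : ∀ x : F, 0 ≤ x → ∃ y : F, x = y ^ 2)
    {a b c : F} (hs : a ^ 2 + b ^ 2 ≠ 0) (P : F × F) {r : F}
    (hr : (a * P.1 + b * P.2 + c) ^ 2 ≤ r * (a ^ 2 + b ^ 2)) :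
    ∃ Q : F × F, a * Q.1 + b * Q.2 + c = 0 ∧ sqDist Q P = r := by
  set e := a * P.1 + b * P.2 + c
  set s := a ^ 2 + b ^ 2 with hs_def
  obtain ⟨y, hy⟩ := hsq (r * s - e ^ 2) (sub_nonneg.mpr hr)
  refine ⟨(P.1 - (e * a + y * b) / s, P.2 - (e * b - y * a) / s), ?_, ?_⟩
  · field_simp
    linear_combination e * hs_def
  · have hr_eq : r = (e ^ 2 + y ^ 2) / s := by
      field_simp
      linear_combination hy
    rw [hr_eq, sqDist]
    field_simp
    linear_combination (-(e ^ 2 + y ^ 2)) * hs_def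

theorem exists_fold_through_reflLine_eq {P₁ P₂ Q : F × F} (h : sqDist Q P₂ = sqDist P₁ P₂) :
    ∃ a' b' c' : F, a' ^ 2 + b' ^ 2 ≠ 0 ∧ a' * P₂.1 + b' * P₂.2 + c' = 0 ∧
      reflLine a' b' c' P₁ = Q := by
  by_cases hQ : P₁ = Q
  · obtain ⟨a', b', c', hnd, hP₂, hP₁⟩ := exists_line_through P₂ P₁
    exact ⟨a', b', c', hnd, hP₂, hQ ▸ reflLine_eq_self hP₁⟩
  · exact ⟨_, _, _, sqDist_ne_zero hQ, perpBisector_of_sqDist_eq h.symm,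
      reflLine_perpBisector (sqDist_ne_zero hQ)⟩

end OrderedField

end Fold

/-- Axiom (H*5) holds in the plane over a linearly ordered field in
which every nonnegative element is a square: if `P₂` is closer to the line `ℓ`
than to `P₁`, there is a fold through `P₂` placing `P₁` onto `ℓ`. -/
theorem stmt_12 {F : Type*} [Field F] [LinearOrder F] [IsStrictOrderedRing F]
    (hsq : ∀ x : F, 0 ≤ x → ∃ y : F, x = y ^ 2)
    (P₁ P₂ : F × F) (a b c : F) (hl : (a, b) ≠ ((0 : F), (0 : F)))
    (hcloser : (a * P₂.1 + b * P₂.2 + c) ^ 2 ≤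
      ((P₁.1 - P₂.1) * (P₁.1 - P₂.1) + (P₁.2 - P₂.2) * (P₁.2 - P₂.2)) * (a ^ 2 + b ^ 2)) :
    ∃ a' b' c' : F, a' ^ 2 + b' ^ 2 ≠ 0 ∧
      a' * P₂.1 + b' * P₂.2 + c' = 0 ∧
      a * (reflLine a' b' c' P₁).1 + b * (reflLine a' b' c' P₁).2 + c = 0 := by
  obtain ⟨Q, hQℓ, hQdist⟩ :=
    Fold.exists_mem_line_sqDist_eq hsq (Fold.sq_add_sq_ne_zero_of_ne hl) P₂
      (r := Fold.sqDist P₁ P₂) (by simpa only [Fold.sqDist, sq] using hcloser)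
  obtain ⟨a', b', c', hnd, hP₂, hrefl⟩ :=
    Fold.exists_fold_through_reflLine_eq hQdist
  exact ⟨a', b', c', hnd, hP₂, by rw [hrefl]; exact hQℓ⟩
end

section
/- Let F be a linearly ordered field such that its Cartesian plane satisfies the following property (H*5-type): for all P₁, P₂ ∈ F² and every line (a, b, c) with (a, b) ≠ (0, 0), if (a·(P₂)₁ + b·(P₂)₂ + c)² ≤ ((P₁ − P₂) ⬝ (P₁ − P₂))·(a² + b²), then there exists P₃ ∈ F² with a·(P₃)₁ + b·(P₃)₂ + c = 0 and (P₃ − P₂) ⬝ (P₃ − P₂) = (P₁ − P₂) ⬝ (P₁ − P₂). Then every nonnegative element of F is a square. -/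
/-- If the plane over a linearly ordered field `F` satisfies the
(H*5)-type property, then every nonnegative element of `F` is a square. -/
theorem stmt_13 {F : Type*} [Field F] [LinearOrder F] [IsStrictOrderedRing F]
    (hH5 : ∀ (P₁ P₂ : F × F) (a b c : F), (a, b) ≠ ((0 : F), (0 : F)) →
      (a * P₂.1 + b * P₂.2 + c) ^ 2 ≤
        ((P₁.1 - P₂.1) * (P₁.1 - P₂.1) + (P₁.2 - P₂.2) * (P₁.2 - P₂.2)) * (a ^ 2 + b ^ 2) →
      ∃ P₃ : F × F, a * P₃.1 + b * P₃.2 + c = 0 ∧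
        (P₃.1 - P₂.1) * (P₃.1 - P₂.1) + (P₃.2 - P₂.2) * (P₃.2 - P₂.2) =
          (P₁.1 - P₂.1) * (P₁.1 - P₂.1) + (P₁.2 - P₂.2) * (P₁.2 - P₂.2)) :
    ∀ x : F, 0 ≤ x → ∃ y : F, x = y ^ 2 := by
  intro x hx
  -- Fold (0, x) onto the x-axis through (0, (x - 1) / 2): the circle of radius (x + 1) / 2
  -- about that point meets the axis at (y, 0) with y² = ((x + 1) / 2)² - ((x - 1) / 2)² = x.
  obtain ⟨⟨y, z⟩, hz, hdist⟩ := hH5 (0, x) (0, (x - 1) / 2) 0 1 0 (by simp) (by nlinarith)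
  obtain rfl : z = 0 := by simpa using hz
  exact ⟨y, by linear_combination -hdist⟩
end

section
/- Let F be a linearly ordered field whose Cartesian plane satisfies the following (H*6)-property: for all P₁, P₂ ∈ F² and all lines ℓ₁ = (a₁, b₁, c₁), ℓ₂ = (a₂, b₂, c₂) with a_i² + b_i² ≠ 0 such that P₁ ∉ ℓ₁, P₂ ∉ ℓ₂, a₁b₂ − a₂b₁ ≠ 0, and (P₁ ≠ P₂ or ℓ₁, ℓ₂ not proportional), there exists a line ℓ₃ = (a₃, b₃, c₃) with a₃² + b₃² ≠ 0 whose reflection sends P₁ to a point of ℓ₁ and P₂ to a point of ℓ₂. Then every element of F has a cube root: for all r ∈ F there exists s ∈ F with s³ = r. -/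
/-- Two lines `(a₁, b₁, c₁)` and `(a₂, b₂, c₂)` are proportional if one is a
nonzero scalar multiple of the other. -/
def PropLine {F : Type*} [Field F] (a₁ b₁ c₁ a₂ b₂ c₂ : F) : Prop :=
  ∃ k : F, k ≠ 0 ∧ a₂ = k * a₁ ∧ b₂ = k * b₁ ∧ c₂ = k * c₁


/-!
Apply (H*6) to the points `(2r, 1)`, `(r, 2)` and the two coordinate axes. If the reflection
across `a x + b y + c = 0` sends the first point to the `y`-axis and the second to the `x`-axis,
eliminating `c` from the two incidence conditions leaves `a³ = r b³`, so `a / b` is a cube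
root of `r`.
-/

section reflLine

variable {F : Type*} [Field F] {a b c : F}

theorem reflLine_fst_eq_zero_iff (hN : a ^ 2 + b ^ 2 ≠ 0) (P : F × F) :
    (reflLine a b c P).1 = 0 ↔ P.1 * (a ^ 2 + b ^ 2) = 2 * (a * P.1 + b * P.2 + c) * a := by
  rw [reflLine, sub_eq_zero, div_mul_eq_mul_div, eq_div_iff hN]

theorem reflLine_snd_eq_zero_iff (hN : a ^ 2 + b ^ 2 ≠ 0) (P : F × F) :
    (reflLine a b c P).2 = 0 ↔ P.2 * (a ^ 2 + b ^ 2) = 2 * (a * P.1 + b * P.2 + c) * b := by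
  rw [reflLine, sub_eq_zero, div_mul_eq_mul_div, eq_div_iff hN]

theorem mul_pow_three_eq_of_reflLine_mem_axes (h2 : (2 : F) ≠ 0) (hN : a ^ 2 + b ^ 2 ≠ 0)
    {x y : F} (h₁ : (reflLine a b c (2 * x, y)).1 = 0) (h₂ : (reflLine a b c (x, 2 * y)).2 = 0) :
    y * a ^ 3 = x * b ^ 3 := by
  rw [reflLine_fst_eq_zero_iff hN] at h₁
  rw [reflLine_snd_eq_zero_iff hN] at h₂
  apply mul_left_cancel₀ h2
  linear_combination a * h₂ - b * h₁

end reflLine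

/-- If the plane over a linearly ordered field `F` satisfies the
(H*6)-property, then every element of `F` has a cube root. -/
theorem stmt_15 {F : Type*} [Field F] [LinearOrder F] [IsStrictOrderedRing F]
    (hH6 : ∀ (P₁ P₂ : F × F) (a₁ b₁ c₁ a₂ b₂ c₂ : F),
      a₁ ^ 2 + b₁ ^ 2 ≠ 0 → a₂ ^ 2 + b₂ ^ 2 ≠ 0 →
      a₁ * P₁.1 + b₁ * P₁.2 + c₁ ≠ 0 →
      a₂ * P₂.1 + b₂ * P₂.2 + c₂ ≠ 0 →
      a₁ * b₂ - a₂ * b₁ ≠ 0 →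
      (P₁ ≠ P₂ ∨ ¬ PropLine a₁ b₁ c₁ a₂ b₂ c₂) →
      ∃ a₃ b₃ c₃ : F, a₃ ^ 2 + b₃ ^ 2 ≠ 0 ∧
        a₁ * (reflLine a₃ b₃ c₃ P₁).1 + b₁ * (reflLine a₃ b₃ c₃ P₁).2 + c₁ = 0 ∧
        a₂ * (reflLine a₃ b₃ c₃ P₂).1 + b₂ * (reflLine a₃ b₃ c₃ P₂).2 + c₂ = 0) :
    ∀ r : F, ∃ s : F, s ^ 3 = r := by
  intro r
  rcases eq_or_ne r 0 with rfl | hr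
  · exact ⟨0, by ring⟩
  have axes_not_proportional : ¬ PropLine (1 : F) 0 0 0 1 0 := by
    rintro ⟨k, hk, h, -⟩
    exact hk (by simpa using h.symm)
  obtain ⟨a, b, c, hN, h₁, h₂⟩ := hH6 (2 * r, 1) (r, 2) 1 0 0 0 1 0
    (by norm_num) (by norm_num) (by simpa using hr) (by norm_num) (by norm_num)
    (Or.inr axes_not_proportional)
  simp only [one_mul, zero_mul, add_zero, zero_add] at h₁ h₂
  have hcube : a ^ 3 = r * b ^ 3 := by
    simpa using mul_pow_three_eq_of_reflLine_mem_axes two_ne_zero hN (x := r) (y := 1) h₁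
      (by simpa using h₂)
  have hb : b ≠ 0 := by
    rintro rfl
    have ha : a = 0 := pow_eq_zero_iff (n := 3) (by norm_num) |>.mp (by simpa using hcube)
    simp [ha] at hN
  exact ⟨a / b, by rw [div_pow, hcube, mul_div_cancel_right₀ r (pow_ne_zero 3 hb)]⟩
end

section
/- (Affine Desargues, De-1.) Let F be a field and consider the affine plane F². Let A, B, C be non-collinear points, A', B', C' be non-collinear points, with A ≠ A', B ≠ B', C ≠ C'. Suppose the three pairs of corresponding sides are parallel and distinct: line AB is parallel to and distinct from line A'B', line AC is parallel to and distinct from line A'C', and line BC is parallel to and distinct from line B'C'. Then the three lines AA', BB', CC' joining corresponding vertices are either pairwise parallel or concurrent (there is a point lying on all three). -/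
open Affine

lemma aux_collinear {F : Type*} [Field F] {A B C : F × F} (c : F)
    (h : C -ᵥ A = c • (B -ᵥ A)) : Collinear F ({A, B, C} : Set (F × F)) := by
  have hC : C = AffineMap.lineMap A B c := by
    rw [AffineMap.lineMap_apply, ← h]; simp
  have : Collinear F ({C, A, B} : Set (F × F)) :=
    collinear_insert_of_mem_affineSpan_pair (hC ▸ AffineMap.lineMap_mem_affineSpan_pair c A B)
  have hset : ({C, A, B} : Set (F × F)) = {A, B, C} := by ext x; simp; tauto
  rwa [hset] at this

lemma aux_ne {F : Type*} [Field F] {A B C : F × F}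
    (hABC : ¬ Collinear F ({A, B, C} : Set (F × F))) : A ≠ B ∧ A ≠ C ∧ B ≠ C := by
  refine ⟨?_, ?_, ?_⟩ <;>
  · rintro rfl
    apply hABC
    first
    | exact (collinear_pair F A C).subset (by intro x hx; simp at hx ⊢; tauto)
    | exact (collinear_pair F A B).subset (by intro x hx; simp at hx ⊢; tauto)

lemma aux_ratio {F : Type*} [Field F] {A B A' B' : F × F} (hABn' : A' ≠ B')
    (hAB : affineSpan F ({A, B} : Set (F × F)) ∥ affineSpan F ({A', B'} : Set (F × F))) :
    ∃ l : F, l ≠ 0 ∧ B' -ᵥ A' = l • (B -ᵥ A) := by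
  have hv := hAB.vectorSpan_eq
  rw [vectorSpan_pair_rev, vectorSpan_pair_rev] at hv
  have hm : B' -ᵥ A' ∈ Submodule.span F {B -ᵥ A} := by
    rw [hv]; exact Submodule.mem_span_singleton_self _
  obtain ⟨l, hl⟩ := Submodule.mem_span_singleton.1 hm
  refine ⟨l, ?_, hl.symm⟩
  rintro rfl
  apply hABn'
  have : B' -ᵥ A' = 0 := by rw [← hl]; simp
  exact (sub_eq_zero.mp this).symm


/-- Affine Desargues, De-1: In the affine plane over a field, if the
three pairs of corresponding sides of two triangles are parallel (and distinct),
then the three lines joining corresponding vertices are pairwise parallel or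
concurrent. -/
theorem stmt_16 {F : Type*} [Field F]
    (A B C A' B' C' : F × F)
    (hABC : ¬ Collinear F ({A, B, C} : Set (F × F)))
    (hABC' : ¬ Collinear F ({A', B', C'} : Set (F × F)))
    (hA : A ≠ A') (hB : B ≠ B') (hC : C ≠ C')
    (hAB : affineSpan F ({A, B} : Set (F × F)) ∥ affineSpan F ({A', B'} : Set (F × F)))
    (hABne : affineSpan F ({A, B} : Set (F × F)) ≠ affineSpan F ({A', B'} : Set (F × F)))
    (hAC : affineSpan F ({A, C} : Set (F × F)) ∥ affineSpan F ({A', C'} : Set (F × F)))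
    (hACne : affineSpan F ({A, C} : Set (F × F)) ≠ affineSpan F ({A', C'} : Set (F × F)))
    (hBC : affineSpan F ({B, C} : Set (F × F)) ∥ affineSpan F ({B', C'} : Set (F × F)))
    (hBCne : affineSpan F ({B, C} : Set (F × F)) ≠ affineSpan F ({B', C'} : Set (F × F))) :
    (affineSpan F ({A, A'} : Set (F × F)) ∥ affineSpan F ({B, B'} : Set (F × F)) ∧
     affineSpan F ({B, B'} : Set (F × F)) ∥ affineSpan F ({C, C'} : Set (F × F)) ∧
     affineSpan F ({A, A'} : Set (F × F)) ∥ affineSpan F ({C, C'} : Set (F × F))) ∨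
    (∃ P : F × F, P ∈ affineSpan F ({A, A'} : Set (F × F)) ∧
      P ∈ affineSpan F ({B, B'} : Set (F × F)) ∧
      P ∈ affineSpan F ({C, C'} : Set (F × F))) := by
  obtain ⟨hABn, hACn, hBCn⟩ := aux_ne hABC
  obtain ⟨hABn', hACn', hBCn'⟩ := aux_ne hABC'
  obtain ⟨l, hl0, hl⟩ := aux_ratio hABn' hAB
  obtain ⟨m, hm0, hm⟩ := aux_ratio hACn' hAC
  obtain ⟨n, hn0, hn⟩ := aux_ratio hBCn' hBC
  simp only [vsub_eq_sub] at hl hm hn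
  have key : (m - n) • (C - A) = (l - n) • (B - A) := by
    have e : m • (C - A) - l • (B - A) = n • (C - A) - n • (B - A) :=
      calc m • (C - A) - l • (B - A) = (C' - A') - (B' - A') := by rw [← hm, ← hl]
        _ = C' - B' := by abel
        _ = n • (C - B) := hn
        _ = n • ((C - A) - (B - A)) := by rw [show C - B = (C - A) - (B - A) by abel]
        _ = n • (C - A) - n • (B - A) := by rw [smul_sub]
    rw [sub_smul, sub_smul]
    calc (m • (C - A) - n • (C - A)) = (m • (C - A) - l • (B - A)) + l • (B - A) - n • (C-A) := by abel
      _ = (n • (C - A) - n • (B - A)) + l • (B - A) - n • (C-A) := by rw [e]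
      _ = l • (B - A) - n • (B - A) := by abel
  have hBAne : B - A ≠ 0 := sub_ne_zero.mpr hABn.symm
  have hmn : m = n := by
    by_contra hne
    have hne' : m - n ≠ 0 := sub_ne_zero.mpr hne
    apply hABC
    apply aux_collinear ((m - n)⁻¹ * (l - n))
    rw [vsub_eq_sub, vsub_eq_sub, mul_smul, ← key, inv_smul_smul₀ hne']
  subst hmn
  have hlm : l = m := by
    have : (l - m) • (B - A) = 0 := by rw [← key]; simp
    rcases smul_eq_zero.mp this with h | h
    · exact sub_eq_zero.mp h
    · exact absurd h hBAne
  subst hlm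
  -- now B' - A' = l (B - A), C' - A' = l (C - A)
  by_cases hl1 : l = 1
  · -- parallel case
    subst hl1
    rw [one_smul] at hl hm
    have hBB : B' - B = A' - A := by
      calc B' - B = (B' - A') - (B - A) + (A' - A) := by abel
        _ = A' - A := by rw [hl]; abel
    have hCC : C' - C = A' - A := by
      calc C' - C = (C' - A') - (C - A) + (A' - A) := by abel
        _ = A' - A := by rw [hm]; abel
    left
    refine ⟨?_, ?_, ?_⟩ <;>
    · rw [AffineSubspace.affineSpan_pair_parallel_iff_vectorSpan_eq,
        vectorSpan_pair_rev, vectorSpan_pair_rev]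
      simp only [vsub_eq_sub, hBB, hCC]
  · -- concurrent case
    right
    have h1l : (1 : F) - l ≠ 0 := sub_ne_zero.mpr (Ne.symm hl1)
    set t : F := (1 - l)⁻¹ with ht
    refine ⟨AffineMap.lineMap A A' t, AffineMap.lineMap_mem_affineSpan_pair t A A', ?_, ?_⟩
    · have hd : (A' - A) - (B' - B) = (1 - l) • (B - A) := by
        calc (A' - A) - (B' - B) = (B - A) - (B' - A') := by abel
          _ = (B - A) - l • (B - A) := by rw [hl]
          _ = (1 - l) • (B - A) := by rw [sub_smul, one_smul]
      have heq : AffineMap.lineMap A A' t = AffineMap.lineMap B B' t := by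
        simp only [AffineMap.lineMap_apply, vsub_eq_sub, vadd_eq_add]
        calc t • (A' - A) + A = t • ((A' - A) - (B' - B)) + t • (B' - B) + A := by
              module
          _ = (B - A) + t • (B' - B) + A := by rw [hd, ht, inv_smul_smul₀ h1l]
          _ = t • (B' - B) + B := by abel
      rw [heq]
      exact AffineMap.lineMap_mem_affineSpan_pair t B B'
    · have hd : (A' - A) - (C' - C) = (1 - l) • (C - A) := by
        calc (A' - A) - (C' - C) = (C - A) - (C' - A') := by abel
          _ = (C - A) - l • (C - A) := by rw [hm]
          _ = (1 - l) • (C - A) := by rw [sub_smul, one_smul]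
      have heq : AffineMap.lineMap A A' t = AffineMap.lineMap C C' t := by
        simp only [AffineMap.lineMap_apply, vsub_eq_sub, vadd_eq_add]
        calc t • (A' - A) + A = t • ((A' - A) - (C' - C)) + t • (C' - C) + A := by
              module
          _ = (C - A) + t • (C' - C) + A := by rw [hd, ht, inv_smul_smul₀ h1l]
          _ = t • (C' - C) + C := by abel
      rw [heq]
      exact AffineMap.lineMap_mem_affineSpan_pair t C C'
end

section
/- (Affine Desargues converse, De-2.) Let F be a field and consider the affine plane F². Let A, B, C be non-collinear points, A', B', C' be non-collinear points, with A ≠ A', B ≠ B', C ≠ C'. Suppose line AB is parallel to and distinct from line A'B', line AC is parallel to and distinct from line A'C', and the three lines AA', BB', CC' are pairwise distinct and are either concurrent or pairwise parallel. Then line BC is parallel to line B'C' (possibly equal). -/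
open Affine

/-- If `u ≠ 0` and `w` is not a multiple of `u`, then `u, w` are independent. -/
lemma aux_indep {F : Type*} [Field F] {u w : F × F}
    (hu : u ≠ 0) (hw : ∀ s : F, s • u ≠ w) {p q : F} (h : p • u + q • w = 0) :
    p = 0 ∧ q = 0 := by
  rcases eq_or_ne q 0 with rfl | hq
  · rw [zero_smul, add_zero, smul_eq_zero] at h
    exact ⟨h.resolve_right hu, rfl⟩
  · exfalso
    have h' : q • w = (-p) • u := by linear_combination (norm := module) h
    have h'' : w = (q⁻¹ * -p) • u := by
      rw [mul_smul, ← h', inv_smul_smul₀ hq]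
    exact hw (q⁻¹ * -p) h''.symm

/-- Parallel lines through pairs of points give a scalar relation. -/
lemma aux_par_scalars {F : Type*} [Field F] {A B A' B' : F × F}
    (h : line[F, A, B] ∥ line[F, A', B']) (hne : A' ≠ B') :
    ∃ l : F, l ≠ 0 ∧ A' - B' = l • (A - B) := by
  have h2 := AffineSubspace.affineSpan_pair_parallel_iff_vectorSpan_eq.1 h
  rw [vectorSpan_pair, vectorSpan_pair, vsub_eq_sub, vsub_eq_sub,
    Submodule.span_singleton_eq_span_singleton] at h2
  obtain ⟨z, hz⟩ := h2
  exact ⟨(z : F), z.ne_zero, by rw [← hz, Units.smul_def]⟩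

/-- A weaker version not needing distinctness of the target points. -/
lemma aux_par_scalars' {F : Type*} [Field F] {A B A' B' : F × F}
    (h : line[F, A, B] ∥ line[F, A', B']) :
    ∃ l : F, l • (A - B) = A' - B' := by
  have h2 := AffineSubspace.affineSpan_pair_parallel_iff_vectorSpan_eq.1 h
  rw [vectorSpan_pair, vectorSpan_pair, vsub_eq_sub, vsub_eq_sub,
    Submodule.span_singleton_eq_span_singleton] at h2
  obtain ⟨z, hz⟩ := h2
  exact ⟨(z : F), by rw [← hz, Units.smul_def]⟩

/-- Membership in a line through two points gives a scalar relation. -/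
lemma aux_mem_scalars {F : Type*} [Field F] {A A' P : F × F}
    (h : P ∈ line[F, A, A']) : ∃ r : F, r • (A' - A) = P - A := by
  have h2 : (P - A) +ᵥ A ∈ line[F, A, A'] := by
    simpa [vadd_eq_add, sub_add_cancel] using h
  obtain ⟨r, hr⟩ := vadd_left_mem_affineSpan_pair.1 h2
  exact ⟨r, by rwa [vsub_eq_sub] at hr⟩

/-- Two distinct lines through a common point have independent directions. -/
lemma aux_lines {F : Type*} [Field F] {A A' B B' P : F × F}
    (hB : B ≠ B')
    (hne : line[F, A, A'] ≠ line[F, B, B'])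
    (hPa : P ∈ line[F, A, A']) (hPb : P ∈ line[F, B, B']) :
    ∀ s : F, s • (A' - A) ≠ B' - B := by
  intro s hs
  apply hne
  rw [AffineSubspace.eq_iff_direction_eq_of_mem hPa hPb, direction_affineSpan,
    direction_affineSpan, vectorSpan_pair, vectorSpan_pair, vsub_eq_sub, vsub_eq_sub,
    Submodule.span_singleton_eq_span_singleton]
  have hs0 : s ≠ 0 := by
    rintro rfl
    rw [zero_smul] at hs
    exact hB (sub_eq_zero.1 hs.symm).symm
  refine ⟨Units.mk0 s hs0, ?_⟩
  rw [Units.smul_def, Units.val_mk0]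
  linear_combination (norm := module) -hs

/-- If line AB is parallel to and distinct from line A'B', then A'-A is not a multiple
of A - B. -/
lemma aux_par_not_mem {F : Type*} [Field F] {A B A' B' : F × F}
    (hAB : line[F, A, B] ∥ line[F, A', B'])
    (hABne : line[F, A, B] ≠ line[F, A', B']) :
    ∀ s : F, s • (A - B) ≠ A' - A := by
  intro s hs
  apply hABne
  have hmem : A' ∈ line[F, A, B] := by
    have h2 := smul_vsub_vadd_mem_affineSpan_pair (-s) A B
    have h3 : (-s) • (B -ᵥ A) +ᵥ A = A' := by
      rw [vsub_eq_sub, vadd_eq_add]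
      linear_combination (norm := module) hs
    rwa [h3] at h2
  rw [AffineSubspace.eq_iff_direction_eq_of_mem hmem (left_mem_affineSpan_pair F A' B')]
  exact hAB.direction_eq

/-- Affine Desargues converse, De-2: In the affine plane over a field,
if two pairs of corresponding sides of two triangles are parallel (and distinct) and
the three lines joining corresponding vertices are pairwise distinct and either
concurrent or pairwise parallel, then the third pair of corresponding sides is
parallel (possibly equal). -/
theorem stmt_17 {F : Type*} [Field F]
    (A B C A' B' C' : F × F)
    (hABC : ¬ Collinear F ({A, B, C} : Set (F × F)))
    (hABC' : ¬ Collinear F ({A', B', C'} : Set (F × F)))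
    (hA : A ≠ A') (hB : B ≠ B') (hC : C ≠ C')
    (hAB : affineSpan F ({A, B} : Set (F × F)) ∥ affineSpan F ({A', B'} : Set (F × F)))
    (hABne : affineSpan F ({A, B} : Set (F × F)) ≠ affineSpan F ({A', B'} : Set (F × F)))
    (hAC : affineSpan F ({A, C} : Set (F × F)) ∥ affineSpan F ({A', C'} : Set (F × F)))
    (hACne : affineSpan F ({A, C} : Set (F × F)) ≠ affineSpan F ({A', C'} : Set (F × F)))
    (hd₁ : affineSpan F ({A, A'} : Set (F × F)) ≠ affineSpan F ({B, B'} : Set (F × F)))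
    (hd₂ : affineSpan F ({B, B'} : Set (F × F)) ≠ affineSpan F ({C, C'} : Set (F × F)))
    (hd₃ : affineSpan F ({A, A'} : Set (F × F)) ≠ affineSpan F ({C, C'} : Set (F × F)))
    (hcp : (∃ P : F × F, P ∈ affineSpan F ({A, A'} : Set (F × F)) ∧
        P ∈ affineSpan F ({B, B'} : Set (F × F)) ∧
        P ∈ affineSpan F ({C, C'} : Set (F × F))) ∨
      (affineSpan F ({A, A'} : Set (F × F)) ∥ affineSpan F ({B, B'} : Set (F × F)) ∧
       affineSpan F ({B, B'} : Set (F × F)) ∥ affineSpan F ({C, C'} : Set (F × F)) ∧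
       affineSpan F ({A, A'} : Set (F × F)) ∥ affineSpan F ({C, C'} : Set (F × F)))) :
    affineSpan F ({B, C} : Set (F × F)) ∥ affineSpan F ({B', C'} : Set (F × F)) := by
  -- distinctness of the primed points
  have hA'B' : A' ≠ B' := by
    rintro rfl
    exact hABC' ((collinear_pair F A' C').subset (by intro x hx; simp at hx ⊢; tauto))
  have hA'C' : A' ≠ C' := by
    rintro rfl
    exact hABC' ((collinear_pair F A' B').subset (by intro x hx; simp at hx ⊢; tauto))
  have hB'C' : B' ≠ C' := by
    rintro rfl
    exact hABC' ((collinear_pair F A' B').subset (by intro x hx; simp at hx ⊢; tauto))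
  obtain ⟨l, hl0, hl⟩ := aux_par_scalars hAB hA'B'
  obtain ⟨m, hm0, hm⟩ := aux_par_scalars hAC hA'C'
  -- goal reduction
  rw [AffineSubspace.affineSpan_pair_parallel_iff_vectorSpan_eq, vectorSpan_pair,
    vectorSpan_pair, vsub_eq_sub, vsub_eq_sub, Submodule.span_singleton_eq_span_singleton]
  rcases hcp with ⟨P, hPa, hPb, hPc⟩ | ⟨hp₁, hp₂, hp₃⟩
  · -- concurrent case
    have hu : A' - A ≠ 0 := sub_ne_zero_of_ne (Ne.symm hA)
    obtain ⟨r, hr⟩ := aux_mem_scalars hPa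
    obtain ⟨s, hs⟩ := aux_mem_scalars hPb
    obtain ⟨t, ht⟩ := aux_mem_scalars hPc
    have hindb := aux_lines hB hd₁ hPa hPb
    have hindc := aux_lines hC hd₃ hPa hPc
    have keyb : (1 - r + l * r) • (A' - A) + (s - 1 - l * s) • (B' - B) = 0 := by
      linear_combination (norm := module) hl + (l - 1) • hr + (1 - l) • hs
    obtain ⟨hb1, hb2⟩ := aux_indep hu hindb keyb
    have keyc : (1 - r + m * r) • (A' - A) + (t - 1 - m * t) • (C' - C) = 0 := by
      linear_combination (norm := module) hm + (m - 1) • hr + (1 - m) • ht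
    obtain ⟨hc1, hc2⟩ := aux_indep hu hindc keyc
    have e1 : r * (1 - l) = 1 := by linear_combination -hb1
    have e2 : s * (1 - l) = 1 := by linear_combination hb2
    have e3 : r * (1 - m) = 1 := by linear_combination -hc1
    have e4 : t * (1 - m) = 1 := by linear_combination hc2
    have h1l : (1 : F) - l ≠ 0 := by
      intro h; rw [h, mul_zero] at e1; exact one_ne_zero e1.symm
    have h1m : (1 : F) - m ≠ 0 := by
      intro h; rw [h, mul_zero] at e3; exact one_ne_zero e3.symm
    have hsr : s = r := mul_right_cancel₀ h1l (e2.trans e1.symm)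
    have htr : t = r := mul_right_cancel₀ h1m (e4.trans e3.symm)
    have hr0 : r ≠ 0 := by
      intro h; rw [h, zero_mul] at e1; exact one_ne_zero e1.symm
    rw [hsr] at hs
    rw [htr] at ht
    have key : r • (B' - C') = (r - 1) • (B - C) := by
      linear_combination (norm := module) hs - ht
    have hr1 : r ≠ 1 := by
      intro h
      rw [h] at key
      have : B' - C' = 0 := by simpa using key
      exact hB'C' (sub_eq_zero.1 this)
    refine ⟨Units.mk0 (r⁻¹ * (r - 1))
      (mul_ne_zero (inv_ne_zero hr0) (sub_ne_zero_of_ne hr1)), ?_⟩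
    rw [Units.smul_def, Units.val_mk0, mul_smul, ← key, smul_smul,
      inv_mul_cancel₀ hr0, one_smul]
  · -- parallel case
    obtain ⟨p, hp⟩ := aux_par_scalars' hp₁
    obtain ⟨q, hq⟩ := aux_par_scalars' hp₃
    have hnAB := aux_par_not_mem hAB hABne
    have hnAC := aux_par_not_mem hAC hACne
    have hp1 : p = 1 := by
      by_contra hp1
      apply hnAB ((1 - p)⁻¹ * (l - 1))
      have heq : (1 - p) • (A' - A) = (l - 1) • (A - B) := by
        linear_combination (norm := module) hl + hp
      have h1p : (1 : F) - p ≠ 0 := sub_ne_zero_of_ne (Ne.symm hp1)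
      rw [mul_smul, ← heq, inv_smul_smul₀ h1p]
    have hq1 : q = 1 := by
      by_contra hq1
      apply hnAC ((1 - q)⁻¹ * (m - 1))
      have heq : (1 - q) • (A' - A) = (m - 1) • (A - C) := by
        linear_combination (norm := module) hm + hq
      have h1q : (1 : F) - q ≠ 0 := sub_ne_zero_of_ne (Ne.symm hq1)
      rw [mul_smul, ← heq, inv_smul_smul₀ h1q]
    subst hp1 hq1
    have hBC : B - C = B' - C' := by
      linear_combination (norm := module) hq - hp
    exact ⟨1, by rw [one_smul, hBC]⟩
end

section
/- (Euclidean axiom of betweenness.) Let A, B, C ∈ ℝ². Then B lies strictly between A and C (i.e., Sbtw ℝ A B C) if and only if A, B, C are collinear and there exists a point D ∈ ℝ² not lying on the affine span of {A, C} such that (D − A) ⬝ (D − C) = 0 and (D − B) ⬝ (C − A) = 0. -/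
private lemma aux_dist_pos {x y : ℝ × ℝ} (h : x ≠ y) :
    0 < (x.1 - y.1) ^ 2 + (x.2 - y.2) ^ 2 := by
  by_contra hc
  push_neg at hc
  have e1 : x.1 = y.1 := by nlinarith [sq_nonneg (x.1 - y.1), sq_nonneg (x.2 - y.2)]
  have e2 : x.2 = y.2 := by nlinarith [sq_nonneg (x.1 - y.1), sq_nonneg (x.2 - y.2)]
  exact h (Prod.ext e1 e2)

/-- Euclidean axiom of betweenness: `B` lies strictly between `A`
and `C` in `ℝ²` iff `A`, `B`, `C` are collinear and there is a point `D` not on the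
line `AC` with `DA ⊥ DC` and `DB ⊥ AC`. -/
theorem stmt_18 (A B C : ℝ × ℝ) :
    Sbtw ℝ A B C ↔
      Collinear ℝ ({A, B, C} : Set (ℝ × ℝ)) ∧
      ∃ D : ℝ × ℝ, D ∉ affineSpan ℝ ({A, C} : Set (ℝ × ℝ)) ∧
        (D.1 - A.1) * (D.1 - C.1) + (D.2 - A.2) * (D.2 - C.2) = 0 ∧
        (D.1 - B.1) * (C.1 - A.1) + (D.2 - B.2) * (C.2 - A.2) = 0 := by
  have memspan : ∀ D : ℝ × ℝ, D ∈ affineSpan ℝ ({A, C} : Set (ℝ × ℝ)) ↔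
      ∃ r : ℝ, r • (C - A) = D - A := by
    intro D
    have := @vadd_left_mem_affineSpan_pair ℝ (ℝ × ℝ) (ℝ × ℝ) _ _ _ _ A C (D - A)
    simpa using this
  constructor
  · intro h
    refine ⟨h.wbtw.collinear, ?_⟩
    obtain ⟨⟨t, ht, hB⟩, hAC⟩ := sbtw_iff_mem_image_Ioo_and_ne.mp h
    rw [AffineMap.lineMap_apply_module'] at hB
    obtain ⟨ht0, ht1⟩ := ht
    have hu : 0 < (C.1 - A.1) ^ 2 + (C.2 - A.2) ^ 2 := aux_dist_pos (Ne.symm hAC)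
    set s := Real.sqrt (t * (1 - t)) with hs
    have hs2 : s ^ 2 = t * (1 - t) := Real.sq_sqrt (by nlinarith)
    have hspos : 0 < s := Real.sqrt_pos.mpr (by nlinarith)
    have hB1 : B.1 = A.1 + t * (C.1 - A.1) := by
      have := congrArg Prod.fst hB; simp at this; linarith
    have hB2 : B.2 = A.2 + t * (C.2 - A.2) := by
      have := congrArg Prod.snd hB; simp at this; linarith
    refine ⟨(B.1 - s * (C.2 - A.2), B.2 + s * (C.1 - A.1)), ?_, ?_, ?_⟩
    · rw [memspan]
      rintro ⟨r, hr⟩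
      have hr1 : r * (C.1 - A.1) = B.1 - s * (C.2 - A.2) - A.1 := congrArg Prod.fst hr
      have hr2 : r * (C.2 - A.2) = B.2 + s * (C.1 - A.1) - A.2 := congrArg Prod.snd hr
      rw [hB1] at hr1
      rw [hB2] at hr2
      have e : s * ((C.1 - A.1) ^ 2 + (C.2 - A.2) ^ 2) = 0 := by
        linear_combination (C.2 - A.2) * hr1 - (C.1 - A.1) * hr2
      linarith [mul_pos hspos hu]
    · simp only
      rw [hB1, hB2]
      linear_combination ((C.1 - A.1) ^ 2 + (C.2 - A.2) ^ 2) * hs2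
    · simp only
      ring
  · rintro ⟨hcol, D, hD, h1, h2⟩
    have hDA : D ≠ A := fun h' => hD (h' ▸ left_mem_affineSpan_pair ℝ A C)
    have hDC : D ≠ C := fun h' => hD (h' ▸ right_mem_affineSpan_pair ℝ A C)
    have hAC : A ≠ C := by
      rintro rfl
      nlinarith [aux_dist_pos hDA, h1]
    have hS : 0 < (C.1 - A.1) ^ 2 + (C.2 - A.2) ^ 2 := aux_dist_pos (Ne.symm hAC)
    obtain ⟨v, hv⟩ := (collinear_iff_of_mem (Set.mem_insert A _)).mp hcol
    obtain ⟨rb, hrb⟩ := hv B (by simp)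
    obtain ⟨rc, hrc⟩ := hv C (by simp)
    have hrc0 : rc ≠ 0 := by
      rintro rfl
      simp at hrc
      exact hAC hrc.symm
    set t := rb / rc with htdef
    have hBt : B = t • (C - A) + A := by
      have htc : t * rc = rb := div_mul_cancel₀ rb hrc0
      rw [hrb, hrc, ← htc, vadd_eq_add, vadd_eq_add]
      module
    have hB1 : B.1 = A.1 + t * (C.1 - A.1) := by
      have := congrArg Prod.fst hBt; simp at this; linarith
    have hB2 : B.2 = A.2 + t * (C.2 - A.2) := by
      have := congrArg Prod.snd hBt; simp at this; linarith
    rw [hB1, hB2] at h2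
    have key2 : (D.1 - A.1) * (C.1 - A.1) + (D.2 - A.2) * (C.2 - A.2)
        = t * ((C.1 - A.1) ^ 2 + (C.2 - A.2) ^ 2) := by linear_combination h2
    have key1 : (D.1 - A.1) ^ 2 + (D.2 - A.2) ^ 2
        = t * ((C.1 - A.1) ^ 2 + (C.2 - A.2) ^ 2) := by linear_combination h1 + key2
    have key3 : (D.1 - C.1) ^ 2 + (D.2 - C.2) ^ 2
        = (1 - t) * ((C.1 - A.1) ^ 2 + (C.2 - A.2) ^ 2) := by
      linear_combination key1 - 2 * key2
    have hp := aux_dist_pos hDA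
    have hq := aux_dist_pos hDC
    have ht0 : 0 < t := by nlinarith [key1, hp, hS]
    have ht1 : t < 1 := by nlinarith [key3, hq, hS]
    rw [sbtw_iff_mem_image_Ioo_and_ne]
    exact ⟨⟨t, ⟨ht0, ht1⟩, by rw [AffineMap.lineMap_apply_module']; exact hBt.symm⟩, hAC⟩
end
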